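/- arXiv:1512.03473 — 2 statements merged into one kernel-verified Lean document; each statement's English description precedes it below -/
import Mathlib

section
/- Optimal choice of weighting: among matrices B(θ) = R_φ^{-1/2} B' with B'ᵀB' = I (B' ∈ ℝ^{L×M}), the quantity (∂μ_φ/∂θ)ᵀ R_φ^{-1/2} B'B'ᵀ R_φ^{-1/2} (∂μ_φ/∂θ) is maximized in the Loewner order by B' = R_φ^{-1/2}(∂μ_φ/∂θ)[(∂μ_φ/∂θ)ᵀ R_φ^{-1}(∂μ_φ/∂θ)]^{-1/2}, attaining the value (∂μ_φ/∂θ)ᵀ R_φ^{-1}(∂μ_φ/∂θ). -/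
open Matrix

/-- Optimal choice of weighting: among `B' ∈ ℝ^{L×M}` with orthonormal columns,
`Gᵀ S B' B'ᵀ S G` (with `S = R^{-1/2}`) is maximized in the Loewner order by
`B'⋆ = S G [(Gᵀ R⁻¹ G)^{-1/2}]`, attaining the value `Gᵀ R⁻¹ G`. -/
theorem optimal_weighting_matrix (L M : ℕ)
    (R : Matrix (Fin L) (Fin L) ℝ) (hR : R.PosDef)
    (G : Matrix (Fin L) (Fin M) ℝ)
    -- `G` has full column rank
    (hrank : G.rank = M)
    (hGRG : (Gᵀ * R⁻¹ * G).PosDef)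
    -- `S` is the symmetric positive-definite square root of `R⁻¹`
    (S : Matrix (Fin L) (Fin L) ℝ) (hS : S.PosDef) (hSsq : S * S = R⁻¹)
    -- `T` is the symmetric positive-definite square root of `(Gᵀ R⁻¹ G)⁻¹`
    (T : Matrix (Fin M) (Fin M) ℝ) (hT : T.PosDef)
    (hTsq : T * T = (Gᵀ * R⁻¹ * G)⁻¹) :
    (∀ B' : Matrix (Fin L) (Fin M) ℝ, B'ᵀ * B' = 1 →
      (Gᵀ * R⁻¹ * G - Gᵀ * S * B' * B'ᵀ * S * G).PosSemidef) ∧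
    ((S * G * T)ᵀ * (S * G * T) = 1 ∧
      Gᵀ * S * (S * G * T) * (S * G * T)ᵀ * S * G = Gᵀ * R⁻¹ * G) := by
  have hS' : Sᵀ = S := by
    have := hS.isHermitian.eq; rwa [conjTranspose_eq_transpose_of_trivial] at this
  have hT' : Tᵀ = T := by
    have := hT.isHermitian.eq; rwa [conjTranspose_eq_transpose_of_trivial] at this
  have hCdet : IsUnit (Gᵀ * R⁻¹ * G).det := isUnit_iff_ne_zero.mpr hGRG.det_pos.ne'
  have hTdet : IsUnit T.det := isUnit_iff_ne_zero.mpr hT.det_pos.ne'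
  have hSS : ∀ X : Matrix (Fin L) (Fin M) ℝ, S * (S * X) = R⁻¹ * X := fun X => by
    rw [← Matrix.mul_assoc, hSsq]
  have hC : (Gᵀ * R⁻¹ * G) = (T * T)⁻¹ := by
    rw [hTsq, Matrix.nonsing_inv_nonsing_inv _ hCdet]
  have hTCT : T * (Gᵀ * R⁻¹ * G) * T = 1 := by
    rw [hC, Matrix.mul_inv_rev]
    simp [Matrix.mul_nonsing_inv _ hTdet, Matrix.nonsing_inv_mul _ hTdet,
      ← Matrix.mul_assoc]
  refine ⟨?_, ?_, ?_⟩
  · intro B' hB'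
    have hPP : (B' * B'ᵀ) * (B' * B'ᵀ) = B' * B'ᵀ := by
      rw [Matrix.mul_assoc, ← Matrix.mul_assoc B'ᵀ, hB', Matrix.one_mul]
    have hP : ((1 : Matrix (Fin L) (Fin L) ℝ) - B' * B'ᵀ).PosSemidef := by
      have h1 : (1 : Matrix (Fin L) (Fin L) ℝ) - B' * B'ᵀ
          = (1 - B' * B'ᵀ)ᴴ * (1 - B' * B'ᵀ) := by
        rw [conjTranspose_eq_transpose_of_trivial, transpose_sub, transpose_one,
          transpose_mul, transpose_transpose, Matrix.sub_mul, Matrix.mul_sub,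
          Matrix.mul_sub, Matrix.one_mul, Matrix.one_mul, hPP]
        abel_nf
        rw [Matrix.mul_one]
      rw [h1]; exact posSemidef_conjTranspose_mul_self _
    have h2 : Gᵀ * R⁻¹ * G - Gᵀ * S * B' * B'ᵀ * S * G
        = (S * G)ᴴ * (1 - B' * B'ᵀ) * (S * G) := by
      rw [conjTranspose_eq_transpose_of_trivial, transpose_mul, hS', ← hSsq]
      simp only [Matrix.mul_sub, Matrix.sub_mul, Matrix.mul_one, Matrix.mul_assoc]
    rw [h2]; exact hP.conjTranspose_mul_mul_same _
  · rw [transpose_mul, transpose_mul, hT', hS']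
    simp only [Matrix.mul_assoc, hSS]
    have h3 : Gᵀ * (R⁻¹ * (G * T)) = (Gᵀ * R⁻¹ * G) * T := by
      simp only [Matrix.mul_assoc]
    rw [h3, ← Matrix.mul_assoc, hTCT]
  · rw [transpose_mul, transpose_mul, hT', hS']
    simp only [Matrix.mul_assoc, hSS]
    have hTTC : T * (T * (Gᵀ * (R⁻¹ * G))) = 1 := by
      rw [← Matrix.mul_assoc, ← Matrix.mul_assoc Gᵀ, hTsq,
        Matrix.nonsing_inv_mul _ hCdet]
    rw [hTTC, Matrix.mul_one, ← Matrix.mul_assoc]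
end

section
/- For the Weibull distribution with shape k and scale θ, the one-statistic bound (μ₁'(θ))²/μ₂(θ) equals (Γ(1+1/k))²/(θ²(Γ(1+2/k) − Γ(1+1/k)²)) · θ⁰, i.e., F(θ) = (k/θ)² ≥ Γ₁²/(θ²(Γ₂ − Γ₁²)) where Γ_l = Γ(1 + l/k), with equality if and only if k = 1. -/
set_option maxHeartbeats 1000000

open Real MeasureTheory Set

lemma weibull_intJ {c : ℝ} (hc : 0 ≤ c) :
    IntegrableOn (fun u : ℝ => Real.exp (-u) * u ^ c) (Ioi 0) := by
  have h := Real.GammaIntegral_convergent (show (0:ℝ) < c + 1 by linarith)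
  simpa using h

lemma weibull_Jval {c : ℝ} (hc : 0 ≤ c) :
    ∫ u in Ioi (0:ℝ), Real.exp (-u) * u ^ c = Real.Gamma (c + 1) := by
  rw [Real.Gamma_eq_integral (show (0:ℝ) < c + 1 by linarith)]
  simp

lemma weibull_key (k : ℝ) (hk : 0 < k) :
    Real.Gamma (1 + 2/k) - (1 + 1/k^2) * (Real.Gamma (1 + 1/k))^2 ≥ 0 ∧
    (k ≠ 1 → Real.Gamma (1 + 2/k) - (1 + 1/k^2) * (Real.Gamma (1 + 1/k))^2 > 0) := by
  have hk' : k ≠ 0 := hk.ne'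
  set A := Real.Gamma (1 + 1/k) with hA
  have hApos : 0 < A := Real.Gamma_pos_of_pos (by positivity)
  set a : ℝ := A * (1 - 1/k) with ha
  set b : ℝ := A / k with hb
  have hbpos : 0 < b := by positivity
  set g : ℝ → ℝ := fun u => u ^ (1/k) - a - b * u with hg
  set f : ℝ → ℝ := fun u => Real.exp (-u) * (g u) ^ 2 with hf
  set F : ℝ → ℝ := fun u =>
      Real.exp (-u) * u ^ (2/k) + a^2 * (Real.exp (-u) * u ^ (0:ℝ))
      + b^2 * (Real.exp (-u) * u ^ (2:ℝ)) + 2*a*b * (Real.exp (-u) * u ^ (1:ℝ))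
      - 2*a * (Real.exp (-u) * u ^ (1/k)) - 2*b * (Real.exp (-u) * u ^ (1/k+1)) with hF
  have hEq : EqOn f F (Ioi 0) := by
    intro u hu
    have hu : (0:ℝ) < u := hu
    have h1 : u ^ (2/k) = u ^ (1/k) * u ^ (1/k) := by
      rw [← Real.rpow_add hu]; ring_nf
    have h2 : u ^ (1/k+1) = u ^ (1/k) * u := by
      rw [Real.rpow_add hu, Real.rpow_one]
    have h3 : u ^ (2:ℝ) = u * u := by
      rw [show (2:ℝ) = 1+1 by norm_num, Real.rpow_add hu, Real.rpow_one]
    simp only [hf, hF, hg, h1, h2, h3, Real.rpow_zero, Real.rpow_one]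
    ring
  have i2k := weibull_intJ (show (0:ℝ) ≤ 2/k by positivity)
  have i0 := weibull_intJ (le_refl (0:ℝ))
  have i2 := weibull_intJ (show (0:ℝ) ≤ 2 by norm_num)
  have i1 := weibull_intJ (show (0:ℝ) ≤ 1 by norm_num)
  have i1k := weibull_intJ (show (0:ℝ) ≤ 1/k by positivity)
  have i1k1 := weibull_intJ (show (0:ℝ) ≤ 1/k + 1 by positivity)
  have j2 : IntegrableOn (fun u : ℝ => Real.exp (-u) * u ^ (2/k)
      + a^2 * (Real.exp (-u) * u ^ (0:ℝ))) (Ioi 0) := by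
    exact i2k.add (i0.const_mul _)
  have j3 : IntegrableOn (fun u : ℝ => Real.exp (-u) * u ^ (2/k)
      + a^2 * (Real.exp (-u) * u ^ (0:ℝ)) + b^2 * (Real.exp (-u) * u ^ (2:ℝ))) (Ioi 0) := by
    exact j2.add (i2.const_mul _)
  have j4 : IntegrableOn (fun u : ℝ => Real.exp (-u) * u ^ (2/k)
      + a^2 * (Real.exp (-u) * u ^ (0:ℝ)) + b^2 * (Real.exp (-u) * u ^ (2:ℝ))
      + 2*a*b * (Real.exp (-u) * u ^ (1:ℝ))) (Ioi 0) := by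
    exact j3.add (i1.const_mul _)
  have j5 : IntegrableOn (fun u : ℝ => Real.exp (-u) * u ^ (2/k)
      + a^2 * (Real.exp (-u) * u ^ (0:ℝ)) + b^2 * (Real.exp (-u) * u ^ (2:ℝ))
      + 2*a*b * (Real.exp (-u) * u ^ (1:ℝ)) - 2*a * (Real.exp (-u) * u ^ (1/k))) (Ioi 0) := by
    exact j4.sub (i1k.const_mul _)
  have hFint : IntegrableOn F (Ioi 0) := by
    exact j5.sub (i1k1.const_mul _)
  have hfint : IntegrableOn f (Ioi 0) :=
    hFint.congr_fun (fun u hu => (hEq hu).symm) measurableSet_Ioi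
  have hval : ∫ u in Ioi (0:ℝ), f u
      = Real.Gamma (1 + 2/k) - (1 + 1/k^2) * A^2 := by
    rw [setIntegral_congr_fun measurableSet_Ioi hEq]
    simp only [hF]
    rw [integral_sub j5 (i1k1.const_mul _),
        integral_sub j4 (i1k.const_mul _),
        integral_add j3 (i1.const_mul _),
        integral_add j2 (i2.const_mul _),
        integral_add i2k (i0.const_mul _),
        integral_const_mul, integral_const_mul, integral_const_mul,
        integral_const_mul, integral_const_mul]
    rw [weibull_Jval (show (0:ℝ) ≤ 2/k by positivity),
        weibull_Jval (le_refl (0:ℝ)),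
        weibull_Jval (show (0:ℝ) ≤ 2 by norm_num),
        weibull_Jval (show (0:ℝ) ≤ 1 by norm_num),
        weibull_Jval (show (0:ℝ) ≤ 1/k by positivity),
        weibull_Jval (show (0:ℝ) ≤ 1/k + 1 by positivity)]
    have e0 : Real.Gamma ((0:ℝ) + 1) = 1 := by norm_num [Real.Gamma_one]
    have e1 : Real.Gamma ((1:ℝ) + 1) = 1 := by norm_num [Real.Gamma_two]
    have e2 : Real.Gamma ((2:ℝ) + 1) = 2 := by
      rw [Real.Gamma_add_one (by norm_num)]; norm_num [Real.Gamma_two]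
    have e1k : Real.Gamma (1/k + 1) = A := by rw [hA, add_comm]
    have e2k : Real.Gamma (2/k + 1) = Real.Gamma (1 + 2/k) := by rw [add_comm]
    have e1k1 : Real.Gamma (1/k + 1 + 1) = (1/k + 1) * A := by
      rw [Real.Gamma_add_one (by positivity), e1k]
    rw [e0, e1, e2, e1k, e2k, e1k1, ha, hb]
    field_simp
    ring
  have hnn : (0:ℝ) ≤ ∫ u in Ioi (0:ℝ), f u := by
    apply setIntegral_nonneg measurableSet_Ioi
    intro u _
    have : (0:ℝ) ≤ (g u)^2 := sq_nonneg _
    have he : (0:ℝ) < Real.exp (-u) := Real.exp_pos _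
    simp only [hf]
    positivity
  constructor
  · rw [hval] at hnn; linarith
  · intro hk1
    have hgne : ∃ u₀ : ℝ, 0 < u₀ ∧ g u₀ ≠ 0 := by
      by_contra h
      push_neg at h
      have h1 := h 1 one_pos
      have h2 := h ((2:ℝ)^k) (Real.rpow_pos_of_pos (by norm_num) k)
      have h3 := h ((4:ℝ)^k) (Real.rpow_pos_of_pos (by norm_num) k)
      have e2 : ((2:ℝ)^k) ^ (1/k) = 2 := by
        rw [← Real.rpow_mul (by norm_num : (0:ℝ) ≤ 2), mul_one_div, div_self hk',
          Real.rpow_one]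
      have e4 : ((4:ℝ)^k) ^ (1/k) = 4 := by
        rw [← Real.rpow_mul (by norm_num : (0:ℝ) ≤ 4), mul_one_div, div_self hk',
          Real.rpow_one]
      have e42 : (4:ℝ)^k = (2:ℝ)^k * (2:ℝ)^k := by
        rw [show (4:ℝ) = 2*2 by norm_num, Real.mul_rpow (by norm_num) (by norm_num)]
      simp only [hg, Real.one_rpow, e2, e4, mul_one] at h1 h2 h3
      rw [e42] at h3
      have ht : (2:ℝ)^k = 2 := by nlinarith [h1, h2, h3, hbpos]
      have : k * Real.log 2 = Real.log 2 := by
        rw [← Real.log_rpow (by norm_num : (0:ℝ) < 2) k, ht]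
      have hlog : Real.log 2 ≠ 0 := ne_of_gt (Real.log_pos (by norm_num))
      exact hk1 (by field_simp at this; tauto)
    obtain ⟨u₀, hu₀, hgu⟩ := hgne
    have hc : ContinuousAt g u₀ := by
      have h1 : ContinuousAt (fun u : ℝ => u ^ (1/k)) u₀ :=
        Real.continuousAt_rpow_const u₀ (1/k) (Or.inl hu₀.ne')
      exact (h1.sub continuousAt_const).sub (continuousAt_const.mul continuousAt_id)
    have hev : ∀ᶠ u in nhds u₀, g u ≠ 0 ∧ u ∈ Ioi (0:ℝ) :=
      (hc.eventually_ne hgu).and (isOpen_Ioi.eventually_mem hu₀)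
    obtain ⟨ε, hε, hball⟩ := Metric.eventually_nhds_iff_ball.1 hev
    have hsub : Metric.ball u₀ ε ⊆ Function.support f ∩ Ioi 0 := by
      intro u hu
      obtain ⟨hgu', hu'⟩ := hball u hu
      refine ⟨?_, hu'⟩
      simp only [hf, Function.mem_support]
      exact mul_ne_zero (Real.exp_ne_zero _) (pow_ne_zero _ hgu')
    have hae : 0 ≤ᶠ[ae (volume.restrict (Ioi (0:ℝ)))] f := by
      filter_upwards with u
      simp only [hf]
      positivity
    have hpos : 0 < ∫ u in Ioi (0:ℝ), f u := by
      rw [setIntegral_pos_iff_support_of_nonneg_ae hae hfint]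
      calc (0 : ENNReal) < volume (Metric.ball u₀ ε) := by
            rw [Real.volume_ball]
            exact ENNReal.ofReal_pos.mpr (by linarith)
        _ ≤ volume (Function.support f ∩ Ioi 0) := measure_mono hsub
    rw [hval] at hpos
    linarith

/-- For the Weibull distribution with shape `k > 0` and scale `θ > 0`, the
Fisher information `(k/θ)²` dominates the one-statistic bound
`Γ₁²/(θ²(Γ₂ − Γ₁²))` with `Γ_l = Γ(1 + l/k)`, with equality iff `k = 1`. -/
theorem weibull_one_statistic_bound (k θ : ℝ) (hk : 0 < k) (hθ : 0 < θ) :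
    (k / θ) ^ 2 ≥
      (Real.Gamma (1 + 1 / k)) ^ 2 /
        (θ ^ 2 * (Real.Gamma (1 + 2 / k) - (Real.Gamma (1 + 1 / k)) ^ 2)) ∧
    ((k / θ) ^ 2 =
      (Real.Gamma (1 + 1 / k)) ^ 2 /
        (θ ^ 2 * (Real.Gamma (1 + 2 / k) - (Real.Gamma (1 + 1 / k)) ^ 2)) ↔
      k = 1) := by
  obtain ⟨hge, hstrict⟩ := weibull_key k hk
  have hk' : k ≠ 0 := hk.ne'
  have hApos : 0 < Real.Gamma (1 + 1/k) := Real.Gamma_pos_of_pos (by positivity)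
  have hk2 : (0:ℝ) < k^2 := by positivity
  have hθ2 : (0:ℝ) < θ^2 := by positivity
  have expand : k^2 * (Real.Gamma (1 + 2/k) - (1 + 1/k^2) * (Real.Gamma (1 + 1/k))^2)
      = k^2 * (Real.Gamma (1 + 2/k) - (Real.Gamma (1 + 1/k))^2)
        - (Real.Gamma (1 + 1/k))^2 := by
    field_simp; ring
  have key1 : (Real.Gamma (1 + 1/k))^2
      ≤ k^2 * (Real.Gamma (1 + 2/k) - (Real.Gamma (1 + 1/k))^2) := by
    nlinarith [mul_nonneg hk2.le hge, expand]
  have hD : 0 < Real.Gamma (1 + 2/k) - (Real.Gamma (1 + 1/k))^2 := by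
    nlinarith [key1, pow_pos hApos 2, hk2]
  have hden : 0 < θ^2 * (Real.Gamma (1 + 2/k) - (Real.Gamma (1 + 1/k))^2) :=
    mul_pos hθ2 hD
  have hdivpow : (k/θ)^2 = k^2/θ^2 := div_pow k θ 2
  refine ⟨?_, ?_, ?_⟩
  · rw [ge_iff_le, hdivpow, div_le_div_iff₀ hden hθ2]
    nlinarith [mul_le_mul_of_nonneg_right key1 hθ2.le]
  · intro heq
    by_contra hk1
    have hstr := hstrict hk1
    have key2 : (Real.Gamma (1 + 1/k))^2
        < k^2 * (Real.Gamma (1 + 2/k) - (Real.Gamma (1 + 1/k))^2) := by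
      nlinarith [mul_pos hk2 hstr, expand]
    have hlt : (Real.Gamma (1 + 1/k))^2 /
        (θ^2 * (Real.Gamma (1 + 2/k) - (Real.Gamma (1 + 1/k))^2)) < (k/θ)^2 := by
      rw [hdivpow, div_lt_div_iff₀ hden hθ2]
      nlinarith [mul_lt_mul_of_pos_right key2 hθ2]
    exact (ne_of_lt hlt) heq.symm
  · intro h
    subst h
    norm_num
end
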